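/- Let m ≥ 1, let φ_e, φ_r : ℝ → ℝ ∪ {+∞} be convex and lower semicontinuous, and let μ_e, μ_r > 0. Assume that for every z ∈ ℝ^m the infimum defining L_e*(z) is attained at some p*(z) ∈ ℝ^m with finite value and the infimum defining L_r*(z) is attained at some q*(z) with Σ_{I⊆[m]} q*_I(z) = 1 and finite value. For a function f : ℝ^m → ℝ, call v ∈ ℝ^m a supergradient of f at z if f(z') ≤ f(z) + v·(z'−z) for all z' ∈ ℝ^m. Then φ_e and φ_r (with μ_e, μ_r) are proportionate for m if and only if for every z ∈ ℝ^m: p*(z) is a supergradient of L_r* at z, and the vector with i-th coordinate Σ_{I⊆[m], i∈I} q*_I(z) is a supergradient of L_e* at z. -/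
import Mathlib


private lemma ereal_sum_ne_bot {α : Type*} (s : Finset α) (f : α → EReal)
    (h : ∀ i ∈ s, f i ≠ ⊥) : ∑ i ∈ s, f i ≠ ⊥ := by
  classical
  induction s using Finset.induction_on with
  | empty => simp
  | @insert a s ha ih =>
    rw [Finset.sum_insert ha]
    simp only [ne_eq, EReal.add_eq_bot_iff, not_or]
    exact ⟨h a (Finset.mem_insert_self a s), ih fun i hi => h i (Finset.mem_insert_of_mem hi)⟩

private lemma ereal_extract {r a μ : ℝ} (hμ : 0 < μ) {S : EReal} (hS : S ≠ ⊥)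
    (h : (r : EReal) = (a : EReal) + (μ : EReal) * S) :
    ∃ c : ℝ, S = (c : EReal) ∧ r = a + μ * c := by
  have hT : S ≠ ⊤ := by
    intro hT
    rw [hT, EReal.coe_mul_top_of_pos hμ, EReal.coe_add_top] at h
    exact EReal.coe_ne_top r h
  refine ⟨S.toReal, (EReal.coe_toReal hT hS).symm, ?_⟩
  rw [← EReal.coe_toReal hT hS] at h
  have h2 : (r : EReal) = ((a + μ * S.toReal : ℝ) : EReal) := by
    rw [h]; norm_cast
  exact_mod_cast h2

private lemma small_of_bound {d C : ℝ} (key : ∀ n : ℕ, 0 < n → |d| ≤ C / n) : d = 0 := by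
  have hC : 0 ≤ C := le_trans (abs_nonneg _) (by simpa using key 1 one_pos)
  have habs : ∀ ε : ℝ, 0 < ε → |d| ≤ ε := by
    intro ε hε
    obtain ⟨n, hn⟩ := exists_nat_gt (C / ε)
    have hn0 : 0 < n := by
      rcases Nat.eq_zero_or_pos n with h0 | h0
      · exfalso; rw [h0] at hn; simp at hn
        exact absurd hn (not_lt.2 (div_nonneg hC hε.le))
      · exact h0
    have hnR : (0 : ℝ) < n := by exact_mod_cast hn0
    calc |d| ≤ C / n := key n hn0
      _ ≤ ε := by
        rw [div_le_iff₀ hnR]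
        have : C < n * ε := (div_lt_iff₀ hε).1 hn
        linarith
  have h0 : |d| ≤ 0 := le_of_forall_pos_le_add (by intro ε hε; simpa using habs ε hε)
  have := abs_nonneg d
  rw [← abs_eq_zero]; linarith


/-- The example-side game value, with generator taking values in `ℝ ∪ {+∞}`
(encoded as `EReal`):
`L_e(p, z) = Σ_{i∈[m]} p_i z_i + μ_e Σ_{i∈[m]} φ_e(p_i)`. -/
noncomputable def gameLe (m : ℕ) (φe : ℝ → EReal) (μe : ℝ) (p z : Fin m → ℝ) : EReal :=
  ((∑ i, p i * z i : ℝ) : EReal) + (μe : EReal) * ∑ i, φe (p i)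

/-- The rado-side game value:
`L_r(q, z) = Σ_{I⊆[m]} q_I Σ_{i∈I} z_i + μ_r Σ_{I⊆[m]} φ_r(q_I)`. -/
noncomputable def gameLr (m : ℕ) (φr : ℝ → EReal) (μr : ℝ) (q : Finset (Fin m) → ℝ)
    (z : Fin m → ℝ) : EReal :=
  ((∑ I : Finset (Fin m), q I * ∑ i ∈ I, z i : ℝ) : EReal) +
    (μr : EReal) * ∑ I : Finset (Fin m), φr (q I)

/-- Convexity for an `ℝ ∪ {+∞}`-valued function on `ℝ`. -/
def ERealConvex (f : ℝ → EReal) : Prop :=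
  ∀ x y a b : ℝ, 0 ≤ a → 0 ≤ b → a + b = 1 →
    f (a * x + b * y) ≤ (a : EReal) * f x + (b : EReal) * f y

/-- `v` is a supergradient of `f : ℝ^m → ℝ` at `z` iff
`f(z') ≤ f(z) + v·(z'−z)` for all `z'`. -/
def IsSupergradientAt (m : ℕ) (f : (Fin m → ℝ) → ℝ) (z v : Fin m → ℝ) : Prop :=
  ∀ z', f z' ≤ f z + ∑ i, v i * (z' i - z i)

/-- Theorem 1 (general case): with convex lower-semicontinuous generators
`φ_e, φ_r : ℝ → ℝ ∪ {+∞}`, and the infima defining `L_e*`/`L_r*` attained with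
finite values at `p*(z)`/`q*(z)` (the latter on the hyperplane `Σ_I q_I = 1`),
the generators are proportionate iff for every `z`: `p*(z)` is a supergradient
of `L_r*` at `z` and `G_m q*(z)` is a supergradient of `L_e*` at `z`. -/
theorem stmt1 (m : ℕ) (hm : 1 ≤ m) (φe φr : ℝ → EReal)
    (hφe_ne_bot : ∀ t, φe t ≠ ⊥) (hφr_ne_bot : ∀ t, φr t ≠ ⊥)
    (hφe_conv : ERealConvex φe) (hφr_conv : ERealConvex φr)
    (hφe_lsc : LowerSemicontinuous φe) (hφr_lsc : LowerSemicontinuous φr)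
    (μe μr : ℝ) (hμe : 0 < μe) (hμr : 0 < μr)
    (pstar : (Fin m → ℝ) → (Fin m → ℝ))
    (qstar : (Fin m → ℝ) → (Finset (Fin m) → ℝ))
    (Lse Lsr : (Fin m → ℝ) → ℝ)
    -- `L_e*(z)` is the infimum over `p ∈ ℝ^m`, it is finite (a real number)
    -- and attained at `p*(z)`
    (hLse : ∀ z, (Lse z : EReal) = ⨅ p : Fin m → ℝ, gameLe m φe μe p z)
    (hLse_att : ∀ z, (Lse z : EReal) = gameLe m φe μe (pstar z) z)
    -- `L_r*(z)` is the infimum over `q` with `Σ_I q_I = 1`, it is finite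
    -- and attained at `q*(z)`, with `Σ_I q*_I(z) = 1`
    (hq_sum : ∀ z, ∑ I : Finset (Fin m), qstar z I = 1)
    (hLsr : ∀ z, (Lsr z : EReal) =
      ⨅ q : {q : Finset (Fin m) → ℝ // ∑ I : Finset (Fin m), q I = 1},
        gameLr m φr μr q.1 z)
    (hLsr_att : ∀ z, (Lsr z : EReal) = gameLr m φr μr (qstar z) z) :
    (∃ b : ℝ, ∀ z, Lse z = Lsr z + b) ↔
    (∀ z, IsSupergradientAt m Lsr z (pstar z) ∧
      IsSupergradientAt m Lse z
        (fun i => ∑ I : Finset (Fin m), if i ∈ I then qstar z I else 0)) := by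
  classical
  -- swap identity
  have swap : ∀ (q : Finset (Fin m) → ℝ) (w : Fin m → ℝ),
      ∑ I : Finset (Fin m), q I * ∑ i ∈ I, w i
        = ∑ i, (∑ I : Finset (Fin m), if i ∈ I then q I else 0) * w i := by
    intro q w
    calc ∑ I : Finset (Fin m), q I * ∑ i ∈ I, w i
        = ∑ I : Finset (Fin m), ∑ i : Fin m, (if i ∈ I then q I * w i else 0) := by
          refine Finset.sum_congr rfl fun I _ => ?_
          rw [Finset.mul_sum, Finset.sum_ite_mem, Finset.univ_inter]
      _ = ∑ i : Fin m, ∑ I : Finset (Fin m), (if i ∈ I then q I * w i else 0) :=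
          Finset.sum_comm
      _ = ∑ i, (∑ I : Finset (Fin m), if i ∈ I then q I else 0) * w i := by
          refine Finset.sum_congr rfl fun i _ => ?_
          rw [Finset.sum_mul]
          exact Finset.sum_congr rfl fun I _ => by rw [ite_mul, zero_mul]
  -- `pstar z` is always a supergradient of `Lse` at `z`
  have supLse : ∀ z, IsSupergradientAt m Lse z (pstar z) := by
    intro z z'
    have hatt := hLse_att z
    unfold gameLe at hatt
    obtain ⟨c, hc, hzc⟩ := ereal_extract hμe
      (ereal_sum_ne_bot _ _ fun i _ => hφe_ne_bot _) hatt
    have h2 : (Lse z' : EReal) ≤ gameLe m φe μe (pstar z) z' := by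
      rw [hLse z']; exact iInf_le _ _
    have h3 : gameLe m φe μe (pstar z) z'
        = ((∑ i, pstar z i * z' i + μe * c : ℝ) : EReal) := by
      unfold gameLe; rw [hc]; norm_cast
    rw [h3, EReal.coe_le_coe_iff] at h2
    have hsplit : ∑ i, pstar z i * (z' i - z i)
        = (∑ i, pstar z i * z' i) - ∑ i, pstar z i * z i := by
      rw [← Finset.sum_sub_distrib]
      exact Finset.sum_congr rfl fun i _ => by ring
    rw [hsplit, hzc]; linarith
  -- `G (qstar z)` is always a supergradient of `Lsr` at `z`
  have supLsr : ∀ z, IsSupergradientAt m Lsr z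
      (fun i => ∑ I : Finset (Fin m), if i ∈ I then qstar z I else 0) := by
    intro z z'
    have hatt := hLsr_att z
    unfold gameLr at hatt
    obtain ⟨c, hc, hzc⟩ := ereal_extract hμr
      (ereal_sum_ne_bot _ _ fun I _ => hφr_ne_bot _) hatt
    have h2 : (Lsr z' : EReal) ≤ gameLr m φr μr (qstar z) z' := by
      rw [hLsr z']
      exact iInf_le (fun q : {q : Finset (Fin m) → ℝ // ∑ I : Finset (Fin m), q I = 1} =>
        gameLr m φr μr q.1 z') ⟨qstar z, hq_sum z⟩
    have h3 : gameLr m φr μr (qstar z) z'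
        = ((∑ I : Finset (Fin m), qstar z I * ∑ i ∈ I, z' i + μr * c : ℝ) : EReal) := by
      unfold gameLr; rw [hc]; norm_cast
    rw [h3, EReal.coe_le_coe_iff] at h2
    rw [swap (qstar z) z'] at h2
    rw [swap (qstar z) z] at hzc
    have hsplit : ∑ i, (∑ I : Finset (Fin m), if i ∈ I then qstar z I else 0) * (z' i - z i)
        = (∑ i, (∑ I : Finset (Fin m), if i ∈ I then qstar z I else 0) * z' i)
          - ∑ i, (∑ I : Finset (Fin m), if i ∈ I then qstar z I else 0) * z i := by
      rw [← Finset.sum_sub_distrib]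
      exact Finset.sum_congr rfl fun i _ => by ring
    rw [hsplit, hzc]; linarith
  constructor
  · -- forward: proportionate ⇒ cross supergradients
    rintro ⟨b, hb⟩ z
    constructor
    · intro z'
      have h1 := supLse z z'
      rw [hb z', hb z] at h1
      linarith
    · intro z'
      have h1 := supLsr z z'
      have e1 := hb z'
      have e2 := hb z
      linarith
  · -- backward: cross supergradients ⇒ proportionate
    intro h
    -- step inequality
    have step : ∀ a b : Fin m → ℝ,
        |(Lse b - Lsr b) - (Lse a - Lsr a)|
          ≤ ∑ i, (pstar a i - pstar b i) * (b i - a i) := by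
      intro a b
      have h1 := supLse a b
      have h2 := (h b).1 a
      have h3 := supLse b a
      have h4 := (h a).1 b
      set A := ∑ i, pstar a i * (b i - a i) with hA
      set B := ∑ i, pstar b i * (b i - a i) with hB
      have hnegB : ∑ i, pstar b i * (a i - b i) = -B := by
        rw [hB, ← Finset.sum_neg_distrib]
        exact Finset.sum_congr rfl fun i _ => by ring
      have hnegA : ∑ i, pstar a i * (a i - b i) = -A := by
        rw [hA, ← Finset.sum_neg_distrib]
        exact Finset.sum_congr rfl fun i _ => by ring
      have hAB : ∑ i, (pstar a i - pstar b i) * (b i - a i) = A - B := by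
        rw [hA, hB, ← Finset.sum_sub_distrib]
        exact Finset.sum_congr rfl fun i _ => by ring
      rw [hnegB] at h2 h3
      rw [hAB, abs_le]
      constructor <;> linarith
    -- the difference is constant
    have hconst : ∀ x y : Fin m → ℝ, Lse y - Lsr y = Lse x - Lsr x := by
      intro x y
      have key : ∀ n : ℕ, 0 < n →
          |(Lse y - Lsr y) - (Lse x - Lsr x)|
            ≤ (∑ i, pstar x i * (y i - x i) - ∑ i, pstar y i * (y i - x i)) / n := by
        intro n hn
        have hnR : (0 : ℝ) < n := by exact_mod_cast hn
        set X : ℕ → (Fin m → ℝ) := fun k => fun i => x i + ((k : ℝ) / n) * (y i - x i)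
          with hX
        set S : ℕ → ℝ := fun k => ∑ i, pstar (X k) i * (y i - x i) with hS
        have hX0 : X 0 = x := by funext i; simp [hX]
        have hXn : X n = y := by
          funext i
          simp only [hX]
          rw [div_self (ne_of_gt hnR)]
          ring
        have tele : (Lse y - Lsr y) - (Lse x - Lsr x)
            = ∑ k ∈ Finset.range n,
                ((Lse (X (k+1)) - Lsr (X (k+1))) - (Lse (X k) - Lsr (X k))) := by
          rw [Finset.sum_range_sub (fun k => Lse (X k) - Lsr (X k)) n, hX0, hXn]
        have stepk : ∀ k ∈ Finset.range n,
            |(Lse (X (k+1)) - Lsr (X (k+1))) - (Lse (X k) - Lsr (X k))|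
              ≤ (S k - S (k+1)) / n := by
          intro k _
          have hb := step (X k) (X (k+1))
          have hrw : ∑ i, (pstar (X k) i - pstar (X (k+1)) i) * (X (k+1) i - X k i)
              = (S k - S (k+1)) / n := by
            have hdiff : ∀ i, X (k+1) i - X k i = (y i - x i) / n := by
              intro i
              simp only [hX]
              push_cast
              ring
            simp only [hS]
            rw [← Finset.sum_sub_distrib, Finset.sum_div]
            refine Finset.sum_congr rfl fun i _ => ?_
            rw [hdiff i]
            ring
          rw [← hrw]
          exact hb
        calc |(Lse y - Lsr y) - (Lse x - Lsr x)|
            = |∑ k ∈ Finset.range n,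
                ((Lse (X (k+1)) - Lsr (X (k+1))) - (Lse (X k) - Lsr (X k)))| := by
              rw [tele]
          _ ≤ ∑ k ∈ Finset.range n,
                |(Lse (X (k+1)) - Lsr (X (k+1))) - (Lse (X k) - Lsr (X k))| :=
              Finset.abs_sum_le_sum_abs _ _
          _ ≤ ∑ k ∈ Finset.range n, (S k - S (k+1)) / n := Finset.sum_le_sum stepk
          _ = (S 0 - S n) / n := by
              rw [← Finset.sum_div, Finset.sum_range_sub' S n]
          _ = (∑ i, pstar x i * (y i - x i) - ∑ i, pstar y i * (y i - x i)) / n := by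
              simp only [hS, hX0, hXn]
      have := small_of_bound key
      linarith
    refine ⟨Lse (fun _ => 0) - Lsr (fun _ => 0), fun z => ?_⟩
    have := hconst (fun _ => 0) z
    linarith
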